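/- For β > 0 and d ≥ 1, let c_β = ∫_{ℝ^d} (1+|y|²)^{−(d+β)/2} dy. Then the recursion (β+d) c_{β+2} = β c_β holds for all β > 0. -/

import Mathlib

open MeasureTheory Metric Set

noncomputable section

/-- The constant `c_β = ∫_{ℝ^d} (1+|y|²)^{−(d+β)/2} dy`. -/
def cConst (d : ℕ) (β : ℝ) : ℝ :=
  ∫ y : EuclideanSpace ℝ (Fin d), (1 + ‖y‖ ^ 2) ^ (-((d : ℝ) + β) / 2)

/-!
In polar coordinates both constants become radial integrals
`∫₀^∞ r^(d-1) (1+r²)^(-s/2) dr`. Writing `r² = (1+r²) - 1`, the derivative of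
`r^d (1+r²)^(-s/2)` is `(d - s) r^(d-1) (1+r²)^(-s/2) + s r^(d-1) (1+r²)^(-(s+2)/2)`.
For `s > d` this function vanishes at `0` and at infinity, so the integral of its derivative
is zero; with `s = d + β` this is the recursion. In dimension `0` both integrands are
constantly `1`.
-/

open Filter Module Topology

lemma integrableOn_Ioi_pow_mul_one_add_sq_rpow {k : ℕ} {s : ℝ} (hs : (k : ℝ) + 1 < s) :
    IntegrableOn (fun r : ℝ => r ^ k * (1 + r ^ 2) ^ (-s / 2)) (Ioi 0) := by
  have h := (integrable_fun_norm_addHaar (volume : Measure (EuclideanSpace ℝ (Fin (k + 1))))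
    (f := fun r : ℝ => (1 + r ^ 2) ^ (-s / 2))).1
    (integrable_rpow_neg_one_add_norm_sq (by simpa using hs))
  simpa using h

lemma hasDerivAt_pow_succ_mul_one_add_sq_rpow (k : ℕ) (s r : ℝ) :
    HasDerivAt (fun r : ℝ => r ^ (k + 1) * (1 + r ^ 2) ^ (-s / 2))
      ((k + 1 - s) * (r ^ k * (1 + r ^ 2) ^ (-s / 2))
        + s * (r ^ k * (1 + r ^ 2) ^ (-(s + 2) / 2))) r := by
  have hpos : 0 < 1 + r ^ 2 := by positivity
  have hbase : HasDerivAt (fun r : ℝ => 1 + r ^ 2) (2 * r) r := by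
    simpa using (hasDerivAt_pow 2 r).const_add 1
  refine ((hasDerivAt_pow (k + 1) r).mul
    (hbase.rpow_const (p := -s / 2) (Or.inl hpos.ne'))).congr_deriv ?_
  have hshift : (1 + r ^ 2) ^ (-s / 2) = (1 + r ^ 2) * (1 + r ^ 2) ^ (-(s + 2) / 2) := by
    rw [show -s / 2 = -(s + 2) / 2 + 1 by ring, Real.rpow_add_one hpos.ne', mul_comm]
  rw [show -s / 2 - 1 = -(s + 2) / 2 by ring, hshift]
  push_cast
  ring

lemma tendsto_pow_succ_mul_one_add_sq_rpow_atTop {k : ℕ} {s : ℝ} (hs : (k : ℝ) + 1 < s) :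
    Tendsto (fun r : ℝ => r ^ (k + 1) * (1 + r ^ 2) ^ (-s / 2)) atTop (𝓝 0) := by
  have hs0 : 0 < s := by linarith [k.cast_nonneg (α := ℝ)]
  have hbound : ∀ᶠ r : ℝ in atTop,
      r ^ (k + 1) * (1 + r ^ 2) ^ (-s / 2) ≤ r ^ (-(s - (k + 1))) := by
    filter_upwards [eventually_gt_atTop 0] with r hr
    calc r ^ (k + 1) * (1 + r ^ 2) ^ (-s / 2) ≤ r ^ (k + 1) * (r ^ 2) ^ (-s / 2) := by
          refine mul_le_mul_of_nonneg_left ?_ (by positivity)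
          exact Real.rpow_le_rpow_of_nonpos (by positivity) (by linarith) (by linarith)
      _ = r ^ (-(s - (k + 1))) := by
          rw [← Real.rpow_natCast, ← Real.rpow_natCast, ← Real.rpow_mul hr.le,
            ← Real.rpow_add hr]
          push_cast
          ring_nf
  refine squeeze_zero' ?_ hbound (tendsto_rpow_neg_atTop (by linarith))
  filter_upwards [eventually_ge_atTop 0] with r hr
  positivity

lemma integral_Ioi_pow_mul_one_add_sq_rpow_recursion {k : ℕ} {s : ℝ} (hs : (k : ℝ) + 1 < s) :
    s * ∫ r in Ioi (0 : ℝ), r ^ k * (1 + r ^ 2) ^ (-(s + 2) / 2)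
      = (s - (k + 1)) * ∫ r in Ioi (0 : ℝ), r ^ k * (1 + r ^ 2) ^ (-s / 2) := by
  have hint := integrableOn_Ioi_pow_mul_one_add_sq_rpow hs
  have hint₂ := integrableOn_Ioi_pow_mul_one_add_sq_rpow (s := s + 2) (by linarith)
  have hftc := integral_Ioi_of_hasDerivAt_of_tendsto'
    (fun r _ => hasDerivAt_pow_succ_mul_one_add_sq_rpow k s r)
    ((hint.const_mul _).add (hint₂.const_mul _)) (tendsto_pow_succ_mul_one_add_sq_rpow_atTop hs)
  rw [integral_add (hint.const_mul _) (hint₂.const_mul _), integral_const_mul,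
    integral_const_mul] at hftc
  simp only [zero_pow k.succ_ne_zero, zero_mul, sub_zero] at hftc
  linear_combination hftc

section HaarMeasure

variable {E : Type*} [NormedAddCommGroup E] [NormedSpace ℝ E] [FiniteDimensional ℝ E]
  [MeasurableSpace E] [BorelSpace E] (μ : Measure E) [μ.IsAddHaarMeasure]

theorem integral_one_add_norm_sq_rpow_recursion {s : ℝ} (hs : (finrank ℝ E : ℝ) < s) :
    s * ∫ x, (1 + ‖x‖ ^ 2) ^ (-(s + 2) / 2) ∂μ
      = (s - finrank ℝ E) * ∫ x, (1 + ‖x‖ ^ 2) ^ (-s / 2) ∂μ := by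
  rcases subsingleton_or_nontrivial E with hE | hE
  · simp [Subsingleton.elim _ (0 : E), finrank_zero_of_subsingleton]
  obtain ⟨k, hk⟩ : ∃ k, finrank ℝ E = k + 1 := Nat.exists_eq_add_one.2 finrank_pos
  rw [hk] at hs ⊢
  push_cast at hs
  rw [integral_fun_norm_addHaar μ (fun r => (1 + r ^ 2) ^ (-(s + 2) / 2)),
    integral_fun_norm_addHaar μ (fun r => (1 + r ^ 2) ^ (-s / 2))]
  simp only [hk, add_tsub_cancel_right, smul_eq_mul, nsmul_eq_mul]
  push_cast
  linear_combination ((k + 1) * μ.real (ball 0 1)) *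
    integral_Ioi_pow_mul_one_add_sq_rpow_recursion hs

end HaarMeasure

theorem stmt5 (d : ℕ) (β : ℝ) (hβ : 0 < β) :
    (β + d) * cConst d (β + 2) = β * cConst d β := by
  have h := integral_one_add_norm_sq_rpow_recursion (volume : Measure (EuclideanSpace ℝ (Fin d)))
    (s := d + β) (by simpa using hβ)
  rw [finrank_euclideanSpace_fin, add_sub_cancel_left] at h
  rw [cConst, cConst, add_comm β, ← h]
  ring_nf
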